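/- Let M_1 = C[x1,x1^{-1}] \otimes C[x2,x3]/\mu^1[x2,x3] and let I_C \subset C[x1,x2,x3] be the monomial ideal of the T-fixed Cohen-Macaulay curve with outgoing partitions (\mu^1,\mu^2,\mu^3). Then there is no nonzero C[x1,x2,x3]-module homomorphism \phi: I_C \to M_1 that is homogeneous of T-weight (w,w,w) with w < 0 (i.e., \phi multiplies weights by (x1 x2 x3)^w for negative w). -/

import Mathlib

/-!
Both `I_C` and `M₁` are multiplicity-free T-modules, with bases indexed by their
weights; a homomorphism of weight `(w,w,w)` is encoded by its coefficient function
`c : weights(I_C) → ℂ`, sending the basis monomial `x^a ∈ I_C` to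
`c(a) · (basis vector of M₁ of weight a + (w,w,w))` (interpreted as `0` when the
target weight does not occur in `M₁`).  The hypothesis `hhom` is exactly
`φ(x_j · x^a) = x_j · φ(x^a)`, and the conclusion is `φ = 0`.

Since `x₁` acts invertibly on `M₁` without changing the `(x₂, x₃)`-part of a weight, `c` is
constant in the `x₁`-direction, and far out in that direction `I_C` is the monomial ideal of
`μ¹` in `ℂ[x₂, x₃]`. This leaves a plane problem: a coefficient at `(t, s) ∉ μ` with
`(t + w, s + w) ∈ μ` can be moved up its column as long as the cell to its left lies in `μ`
(the target weight stays in `μ` because `w ≤ -1`), and then one column to the left, where it is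
either a smaller instance or killed because its target weight has left `μ`. Induction on the
column ends at `t = 0`, where `t + w < 0`.
-/

open scoped Classical

noncomputable section

/-- The standard basis weight vector `e_j ∈ ℤ³`. -/
def eZ (j : Fin 3) : Fin 3 → ℤ := fun i => if i = j then 1 else 0

/-- The standard basis exponent vector `e_j ∈ ℕ³`. -/
def eN (j : Fin 3) : Fin 3 → ℕ := fun i => if i = j then 1 else 0

/-- The monomial `x^a` lies in `I_C`: for each axis `i`, the cross-section exponents
lie outside the partition `μ i`. -/
def inIC (μ : Fin 3 → YoungDiagram) (a : Fin 3 → ℕ) : Prop :=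
  ∀ i : Fin 3, (a (i + 1), a (i + 2)) ∉ μ i

/-- A weight `b ∈ ℤ³` occurs in `M₁` : the cross-section coordinates `(b₂,b₃)` are
nonnegative and lie in the partition `μ 0`. -/
def inM1 (μ : Fin 3 → YoungDiagram) (b : Fin 3 → ℤ) : Prop :=
  0 ≤ b 1 ∧ 0 ≤ b 2 ∧ ((b 1).toNat, (b 2).toNat) ∈ μ 0

def YoungDiagram.IsCellInt (μ : YoungDiagram) (p q : ℤ) : Prop :=
  0 ≤ p ∧ 0 ≤ q ∧ (p.toNat, q.toNat) ∈ μ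

/-- `f` is the coefficient function of a homomorphism, of weight `(w, w)`, from the monomial
ideal spanned by the monomials outside `μ` to `ℂ[y, z]/μ`. -/
structure YoungDiagram.IsWeightHom (μ : YoungDiagram) (w : ℤ) (f : ℕ → ℕ → ℂ) :
    Prop where
  succ_fst : ∀ t s : ℕ, (t, s) ∉ μ →
    (if μ.IsCellInt (t + w + 1) (s + w) then f (t + 1) s else 0) =
      (if μ.IsCellInt (t + w) (s + w) ∧ μ.IsCellInt (t + w + 1) (s + w) then f t s else 0)
  succ_snd : ∀ t s : ℕ, (t, s) ∉ μ →
    (if μ.IsCellInt (t + w) (s + w + 1) then f t (s + 1) else 0) =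
      (if μ.IsCellInt (t + w) (s + w) ∧ μ.IsCellInt (t + w) (s + w + 1) then f t s else 0)

namespace YoungDiagram

theorem isCellInt_of_mem_of_le {μ : YoungDiagram} {i j : ℕ} {p q : ℤ} (hij : (i, j) ∈ μ)
    (hp : 0 ≤ p) (hq : 0 ≤ q) (hpi : p ≤ i) (hqj : q ≤ j) : μ.IsCellInt p q :=
  ⟨hp, hq, μ.up_left_mem (by omega) (by omega) hij⟩

namespace IsWeightHom

variable {μ : YoungDiagram} {w : ℤ} {f : ℕ → ℕ → ℂ}

theorem apply_succ_fst (hf : μ.IsWeightHom w f) {t s : ℕ} (hts : (t, s) ∉ μ)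
    (hcell : μ.IsCellInt (t + w + 1) (s + w)) :
    f (t + 1) s = if μ.IsCellInt (t + w) (s + w) then f t s else 0 := by
  simpa [hcell] using hf.succ_fst t s hts

theorem apply_succ_snd (hf : μ.IsWeightHom w f) {t s : ℕ} (hts : (t, s) ∉ μ)
    (hcell : μ.IsCellInt (t + w) (s + w)) (hcell' : μ.IsCellInt (t + w) (s + w + 1)) :
    f t (s + 1) = f t s := by
  simpa [hcell, hcell'] using hf.succ_snd t s hts

theorem apply_succ_eq_zero (hf : μ.IsWeightHom w f) (hw : w < 0) {t : ℕ}
    (ih : ∀ s : ℕ, (t, s) ∉ μ → μ.IsCellInt (t + w) (s + w) → f t s = 0) (s : ℕ)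
    (hts : (t + 1, s) ∉ μ) (hcell : μ.IsCellInt ((t + 1 : ℕ) + w) (s + w)) :
    f (t + 1) s = 0 := by
  have far : ∀ u, μ.rowLen t ≤ u → μ.IsCellInt (t + w + 1) (u + w) → f (t + 1) u = 0 := by
    intro u hu hcell
    have hout : (t, u) ∉ μ := by rw [mem_iff_lt_rowLen]; omega
    rw [hf.apply_succ_fst hout hcell]
    split_ifs with h
    · exact ih u hout h
    · rfl
  rcases le_total (μ.rowLen t) s with hs | hs
  · exact far s hs (by simpa [add_right_comm] using hcell)
  induction hs using Nat.decreasingInduction with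
  | self => exact far _ le_rfl (by simpa [add_right_comm] using hcell)
  | of_succ k hk ih' =>
    have hmem : (t, k) ∈ μ := mem_iff_lt_rowLen.2 hk
    have hcell' : μ.IsCellInt ((t + 1 : ℕ) + w) (k + w + 1) :=
      isCellInt_of_mem_of_le hmem hcell.1 (by linarith [hcell.2.1]) (by push_cast; omega)
        (by omega)
    rw [← hf.apply_succ_snd hts hcell hcell']
    exact ih' (fun h => hts (μ.up_left_mem le_rfl k.le_succ h))
      (by simpa [add_right_comm] using hcell')

theorem eq_zero (hf : μ.IsWeightHom w f) (hw : w < 0) :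
    ∀ t s : ℕ, (t, s) ∉ μ → μ.IsCellInt (t + w) (s + w) → f t s = 0 := by
  intro t
  induction t with
  | zero => exact fun s _ hcell => absurd hcell.1 (by omega)
  | succ t ih => exact hf.apply_succ_eq_zero hw ih

end IsWeightHom

end YoungDiagram

theorem inIC_mono {μ : Fin 3 → YoungDiagram} {a a' : Fin 3 → ℕ} (h : a ≤ a')
    (ha : inIC μ a) : inIC μ a' :=
  fun i hi => ha i ((μ i).up_left_mem (h _) (h _) hi)

theorem inIC_vec_of_notMem {μ : Fin 3 → YoungDiagram} {x t s : ℕ} (hx1 : (μ 1).rowLen 0 ≤ x)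
    (hx2 : (μ 2).colLen 0 ≤ x) (hts : (t, s) ∉ μ 0) : inIC μ ![x, t, s] := by
  intro i
  fin_cases i
  · simpa using hts
  · simp only [YoungDiagram.mem_iff_lt_rowLen]
    simpa using ((μ 1).rowLen_anti 0 s s.zero_le).trans hx1
  · simp only [YoungDiagram.mem_iff_lt_colLen]
    simpa using ((μ 2).colLen_anti 0 t t.zero_le).trans hx2

theorem vec_add_eN_one (x t s : ℕ) : ![x, t, s] + eN 1 = ![x, t + 1, s] := by
  funext i; fin_cases i <;> simp [eN]

theorem vec_add_eN_two (x t s : ℕ) : ![x, t, s] + eN 2 = ![x, t, s + 1] := by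
  funext i; fin_cases i <;> simp [eN]

theorem inM1_iff_isCellInt {μ : Fin 3 → YoungDiagram} {b : Fin 3 → ℤ} :
    inM1 μ b ↔ (μ 0).IsCellInt (b 1) (b 2) :=
  Iff.rfl

def IsWeightHomToM1 (μ : Fin 3 → YoungDiagram) (w : ℤ) (c : (Fin 3 → ℕ) → ℂ) : Prop :=
  ∀ a : Fin 3 → ℕ, inIC μ a → ∀ j : Fin 3,
    (if inM1 μ ((fun i => (a i : ℤ) + w) + eZ j) then c (a + eN j) else 0) =
    (if inM1 μ (fun i => (a i : ℤ) + w) ∧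
        inM1 μ ((fun i => (a i : ℤ) + w) + eZ j) then c a else 0)

namespace IsWeightHomToM1

variable {μ : Fin 3 → YoungDiagram} {w : ℤ} {c : (Fin 3 → ℕ) → ℂ}

theorem apply_add_eN_zero (hc : IsWeightHomToM1 μ w c) {a : Fin 3 → ℕ} (ha : inIC μ a)
    (hM : inM1 μ (fun i => (a i : ℤ) + w)) : c (a + eN 0) = c a := by
  have hM' : inM1 μ ((fun i => (a i : ℤ) + w) + eZ 0) := by
    simpa [inM1_iff_isCellInt, eZ] using hM
  simpa [hM, hM'] using hc a ha 0

theorem apply_add_nsmul_eN_zero (hc : IsWeightHomToM1 μ w c) {a : Fin 3 → ℕ} (ha : inIC μ a)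
    (hM : inM1 μ (fun i => (a i : ℤ) + w)) (k : ℕ) : c (a + k • eN 0) = c a := by
  induction k with
  | zero => simp
  | succ k ih =>
    have hle : a ≤ a + k • eN 0 := le_self_add
    rw [succ_nsmul, ← add_assoc, hc.apply_add_eN_zero (inIC_mono hle ha)
      (by simpa [inM1_iff_isCellInt, eN] using hM), ih]

theorem isWeightHom_slice (hc : IsWeightHomToM1 μ w c) {x : ℕ} (hx1 : (μ 1).rowLen 0 ≤ x)
    (hx2 : (μ 2).colLen 0 ≤ x) : (μ 0).IsWeightHom w (fun t s => c ![x, t, s]) where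
  succ_fst t s hts := by
    have h := hc _ (inIC_vec_of_notMem hx1 hx2 hts) 1
    rw [vec_add_eN_one] at h
    simp only [inM1_iff_isCellInt] at h
    convert h using 4 <;> simp [eZ]
  succ_snd t s hts := by
    have h := hc _ (inIC_vec_of_notMem hx1 hx2 hts) 2
    rw [vec_add_eN_two] at h
    simp only [inM1_iff_isCellInt] at h
    convert h using 4 <;> simp [eZ]

end IsWeightHomToM1

theorem no_negative_weight_homomorphism
    (μ : Fin 3 → YoungDiagram) (w : ℤ) (hw : w < 0)
    (c : (Fin 3 → ℕ) → ℂ)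
    (hhom : ∀ a : Fin 3 → ℕ, inIC μ a → ∀ j : Fin 3,
      (if inM1 μ ((fun i => (a i : ℤ) + w) + eZ j) then c (a + eN j) else 0) =
      (if inM1 μ (fun i => (a i : ℤ) + w) ∧
          inM1 μ ((fun i => (a i : ℤ) + w) + eZ j) then c a else 0)) :
    ∀ a : Fin 3 → ℕ, inIC μ a → inM1 μ (fun i => (a i : ℤ) + w) → c a = 0 := by
  intro a ha hM
  set N := (μ 1).rowLen 0 + (μ 2).colLen 0
  have hshift : a + N • eN 0 = ![a 0 + N, a 1, a 2] := by
    funext i; fin_cases i <;> simp [eN]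
  rw [← IsWeightHomToM1.apply_add_nsmul_eN_zero hhom ha hM N, hshift]
  have hslice := IsWeightHomToM1.isWeightHom_slice hhom (x := a 0 + N) (by omega) (by omega)
  exact hslice.eq_zero hw (a 1) (a 2) (by simpa using ha 0) hM

end
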